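/- Let 0 < τ < 1, let R ≥ 1 be an integer, and let w ∈ ℝ^R satisfy |w^{(1)}| ≥ |w^{(2)}| ≥ … ≥ |w^{(R)}|. Suppose the τ-critical index of w is larger than t, and let g ≤ t be an index with t − g ≥ (1/τ²)·(3·ln(1/τ) + ln R). Then Σ_{j>t} |w^{(j)}| ≤ √τ · |w^{(g)}|. -/

import Mathlib

/-!
Indexing coordinates from `0`, so that the paper's `w^{(g)}` is `w_{g-1}`: below the critical
index each coordinate carries more than a `τ²` fraction of the squared mass of the tail starting
at it, so the tail sums of squares `S p = ∑_{q ≥ p} w_q²` decay geometrically: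
`S t ≤ (1 - τ²)^(t-g+1) S (g-1) ≤ (1 - τ²)^(t-g+1) w_{g-1}² / τ²`. By the gap hypothesis and
`1 - x ≤ exp (-x)` the factor is at most `τ³ / R`, and Cauchy–Schwarz over the at most `R`
coordinates `j ≥ t` gives `(∑_{j ≥ t} |w_j|)² ≤ R · S t ≤ τ w_{g-1}²`.
-/

open Finset

namespace CriticalIndex

variable {n : ℕ} (w : Fin n → ℝ)

def tailSqSum (p : ℕ) : ℝ :=
  ∑ q ∈ univ.filter (fun q : Fin n => p ≤ (q : ℕ)), w q ^ 2

lemma tailSqSum_nonneg (p : ℕ) : 0 ≤ tailSqSum w p :=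
  sum_nonneg fun _ _ => sq_nonneg _

lemma tailSqSum_eq_sum_filter_le (p : Fin n) :
    tailSqSum w p = ∑ q ∈ univ.filter (fun q : Fin n => p ≤ q), w q ^ 2 := by
  simp only [tailSqSum, Fin.le_def]

lemma tailSqSum_eq_zero {p : ℕ} (hp : n ≤ p) : tailSqSum w p = 0 :=
  sum_eq_zero fun q hq => absurd q.isLt (by simp only [mem_filter] at hq; omega)

lemma tailSqSum_eq_sq_add {p : ℕ} (hp : p < n) :
    tailSqSum w p = w ⟨p, hp⟩ ^ 2 + tailSqSum w (p + 1) := by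
  have hsplit : univ.filter (fun q : Fin n => p ≤ (q : ℕ))
      = insert ⟨p, hp⟩ (univ.filter (fun q : Fin n => p + 1 ≤ (q : ℕ))) := by
    ext q
    simp only [mem_filter, mem_univ, true_and, mem_insert, Fin.ext_iff]
    omega
  rw [tailSqSum, hsplit, sum_insert (by simp), tailSqSum]

variable {w}

lemma sq_mul_tailSqSum_lt {τ : ℝ} (hτ : 0 ≤ τ) {p : ℕ} (hp : p < n)
    (hcrit : τ * √(tailSqSum w p) < |w ⟨p, hp⟩|) : τ ^ 2 * tailSqSum w p < w ⟨p, hp⟩ ^ 2 := by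
  rw [← sq_abs (w _), ← Real.sq_sqrt (tailSqSum_nonneg w p), ← mul_pow]
  exact pow_lt_pow_left₀ hcrit (by positivity) two_ne_zero

lemma tailSqSum_succ_le {τ : ℝ} (hτ : 0 ≤ τ) {p : ℕ}
    (hcrit : ∀ hp : p < n, τ * √(tailSqSum w p) < |w ⟨p, hp⟩|) :
    tailSqSum w (p + 1) ≤ (1 - τ ^ 2) * tailSqSum w p := by
  by_cases hpn : p < n
  · linarith [sq_mul_tailSqSum_lt hτ hpn (hcrit hpn), tailSqSum_eq_sq_add w hpn]
  · rw [tailSqSum_eq_zero w (by omega), tailSqSum_eq_zero w (by omega), mul_zero]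

lemma tailSqSum_le_one_sub_sq_pow_mul {τ : ℝ} (hτ0 : 0 ≤ τ) (hτ1 : τ ≤ 1) {s t : ℕ}
    (hst : s ≤ t)
    (hcrit : ∀ (p : ℕ) (hp : p < n), s ≤ p → p < t → τ * √(tailSqSum w p) < |w ⟨p, hp⟩|) :
    tailSqSum w t ≤ (1 - τ ^ 2) ^ (t - s) * tailSqSum w s := by
  have hdecay := le_geom (u := fun k => tailSqSum w (s + k)) (by nlinarith) (t - s)
    fun k hk => tailSqSum_succ_le (p := s + k) hτ0 fun hp => hcrit _ hp (by omega) (by omega)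
  simpa only [Nat.add_sub_cancel' hst, add_zero] using hdecay

lemma sq_sum_abs_le_mul_tailSqSum (t : ℕ) :
    (∑ j ∈ univ.filter (fun j : Fin n => t ≤ (j : ℕ)), |w j|) ^ 2 ≤ n * tailSqSum w t := by
  calc (∑ j ∈ univ.filter (fun j : Fin n => t ≤ (j : ℕ)), |w j|) ^ 2
      ≤ #(univ.filter (fun j : Fin n => t ≤ (j : ℕ))) * tailSqSum w t := by
        simpa only [sq_abs, tailSqSum] using sq_sum_le_card_mul_sum_sq (f := fun j => |w j|)
    _ ≤ n * tailSqSum w t := by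
        gcongr
        · exact tailSqSum_nonneg w t
        · exact_mod_cast (card_le_univ _).trans_eq (Fintype.card_fin n)

end CriticalIndex

lemma mul_one_sub_pow_le_of_log_div_le {x N c : ℝ} (hx : x ≤ 1) (hN : 0 < N) (hc : 0 < c)
    {k : ℕ} (hk : Real.log (N / c) ≤ k * x) : N * (1 - x) ^ k ≤ c := by
  have hpow : (1 - x) ^ k ≤ c / N := calc
    (1 - x) ^ k ≤ Real.exp (-x) ^ k :=
      pow_le_pow_left₀ (by linarith) (Real.one_sub_le_exp_neg x) k
    _ = Real.exp (-(k * x)) := by rw [← Real.exp_nat_mul]; ring_nf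
    _ ≤ Real.exp (-Real.log (N / c)) := Real.exp_le_exp.mpr (neg_le_neg hk)
    _ = c / N := by rw [Real.exp_neg, Real.exp_log (by positivity), inv_div]
  rwa [le_div_iff₀ hN, mul_comm] at hpow

lemma natCast_mul_one_sub_sq_pow_le_cube {N k : ℕ} (hN : 0 < N) {τ : ℝ} (hτ0 : 0 < τ)
    (hτ1 : τ ≤ 1) (hk : (1 / τ ^ 2) * (3 * Real.log (1 / τ) + Real.log N) ≤ k) :
    N * (1 - τ ^ 2) ^ k ≤ τ ^ 3 := by
  have hN' : (0 : ℝ) < N := Nat.cast_pos.mpr hN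
  refine mul_one_sub_pow_le_of_log_div_le (by nlinarith) hN' (by positivity) ?_
  have hlog : Real.log (N / τ ^ 3) = 3 * Real.log (1 / τ) + Real.log N := by
    rw [Real.log_div hN'.ne' (by positivity), Real.log_pow, one_div, Real.log_inv]
    push_cast; ring
  rwa [hlog, ← div_le_iff₀ (by positivity), ← one_div_mul_eq_div]

open CriticalIndex

theorem stmt_16 (R : ℕ) (τ : ℝ) (hτ0 : 0 < τ) (hτ1 : τ < 1)
    (w : Fin R → ℝ)
    (t g : ℕ) (hg1 : 1 ≤ g) (hgt : g ≤ t) (hgR : g ≤ R)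
    (hcrit : ∀ p : Fin R, (p : ℕ) < t →
      τ * Real.sqrt (∑ q ∈ Finset.univ.filter (fun q : Fin R => p ≤ q), (w q) ^ 2) < |w p|)
    (hgap : (1 / τ ^ 2) * (3 * Real.log (1 / τ) + Real.log R) ≤ (t : ℝ) - (g : ℝ)) :
    ∑ j ∈ Finset.univ.filter (fun j : Fin R => t < (j : ℕ) + 1), |w j|
      ≤ Real.sqrt τ * |w ⟨g - 1, by omega⟩| := by
  have hcrit' : ∀ (p : ℕ) (hp : p < R), p < t → τ * √(tailSqSum w p) < |w ⟨p, hp⟩| :=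
    fun p hp hpt => by simpa only [← tailSqSum_eq_sum_filter_le] using hcrit ⟨p, hp⟩ hpt
  set a := w ⟨g - 1, by omega⟩
  have hdecay : tailSqSum w t ≤ (1 - τ ^ 2) ^ (t - (g - 1)) * tailSqSum w (g - 1) :=
    tailSqSum_le_one_sub_sq_pow_mul hτ0.le hτ1.le (by omega) fun p hp _ hpt => hcrit' p hp hpt
  have hhead : τ ^ 2 * tailSqSum w (g - 1) ≤ a ^ 2 :=
    (sq_mul_tailSqSum_lt hτ0.le _ (hcrit' _ _ (by omega))).le
  have hfactor : R * (1 - τ ^ 2) ^ (t - (g - 1)) ≤ τ ^ 3 := by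
    refine natCast_mul_one_sub_sq_pow_le_cube (by omega) hτ0 hτ1.le (hgap.trans ?_)
    rw [Nat.cast_sub (by omega), Nat.cast_sub hg1]
    linarith
  have htail : univ.filter (fun j : Fin R => t < (j : ℕ) + 1) = univ.filter (t ≤ ·.val) :=
    filter_congr fun j _ => by omega
  rw [htail, ← Real.sqrt_sq_eq_abs, ← Real.sqrt_mul hτ0.le]
  refine Real.le_sqrt_of_sq_le ?_
  calc _ ≤ R * tailSqSum w t := sq_sum_abs_le_mul_tailSqSum t
    _ ≤ R * (1 - τ ^ 2) ^ (t - (g - 1)) * tailSqSum w (g - 1) := by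
      rw [mul_assoc]; gcongr
    _ ≤ τ ^ 3 * tailSqSum w (g - 1) := by gcongr; exact tailSqSum_nonneg w _
    _ = τ * (τ ^ 2 * tailSqSum w (g - 1)) := by ring
    _ ≤ τ * a ^ 2 := by gcongr
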